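/- The maximum of T(k,N) over k ∈ Λ_N equals 2N(2N+1)² - 2, and this maximum is attained exactly at the six axial vectors (±1,0,0), (0,±1,0), (0,0,±1). -/
import Mathlib


/-- The truncated nonzero lattice `Λ_N`. -/
def Lam (N : ℕ) : Set (Fin 3 → ℤ) := {k | k ≠ 0 ∧ ∀ i, |k i| ≤ (N : ℤ)}

/-- The mode-level triad count `T(k,N)`. -/
noncomputable def triadCount (N : ℕ) (k : Fin 3 → ℤ) : ℕ :=
  Set.ncard {pq : (Fin 3 → ℤ) × (Fin 3 → ℤ) |
    pq.1 ∈ Lam N ∧ pq.2 ∈ Lam N ∧ pq.1 + pq.2 = k}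

/-- The six axial vectors `(±1,0,0), (0,±1,0), (0,0,±1)`. -/
def IsAxial (k : Fin 3 → ℤ) : Prop :=
  ∃ i, |k i| = 1 ∧ ∀ j, j ≠ i → k j = 0

lemma triad_formula (N : ℕ) (hN : 1 ≤ N) (k : Fin 3 → ℤ) (hk : k ∈ Lam N) :
    (triadCount N k : ℤ) = (∏ i, (2*(N:ℤ)+1 - |k i|)) - 2 := by
  obtain ⟨hk0, hkb⟩ := hk
  set B : Finset (Fin 3 → ℤ) :=
    Fintype.piFinset (fun i => Finset.Icc (max (-(N:ℤ)) (k i - N)) (min (N:ℤ) (k i + N)))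
    with hB
  have hmemB : ∀ p : Fin 3 → ℤ, p ∈ B ↔
      ∀ i, max (-(N:ℤ)) (k i - N) ≤ p i ∧ p i ≤ min (N:ℤ) (k i + N) := by
    intro p
    simp [hB, Fintype.mem_piFinset, Finset.mem_Icc]
  have h0B : (0 : Fin 3 → ℤ) ∈ B := by
    rw [hmemB]; intro i
    have := hkb i; rw [abs_le] at this
    simp only [Pi.zero_apply]
    omega
  have hkB : k ∈ B := by
    rw [hmemB]; intro i
    have := hkb i; rw [abs_le] at this
    omega
  have hk0' : k ≠ 0 := hk0
  have hkB' : k ∈ B.erase 0 := Finset.mem_erase.2 ⟨hk0', hkB⟩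
  have hinj : Function.Injective (fun p : Fin 3 → ℤ => (p, k - p)) := by
    intro a b h
    simpa using congrArg Prod.fst h
  have hset : {pq : (Fin 3 → ℤ) × (Fin 3 → ℤ) |
      pq.1 ∈ Lam N ∧ pq.2 ∈ Lam N ∧ pq.1 + pq.2 = k}
      = (fun p => (p, k - p)) '' ↑((B.erase 0).erase k) := by
    ext ⟨p, q⟩
    simp only [Set.mem_setOf_eq, Set.mem_image, Finset.mem_coe, Finset.mem_erase]
    constructor
    · rintro ⟨⟨hp0, hpb⟩, ⟨hq0, hqb⟩, hpq⟩
      have hq : q = k - p := by rw [← hpq]; ring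
      refine ⟨p, ⟨?_, hp0, ?_⟩, by rw [hq]⟩
      · intro h; subst h
        exact hq0 (by rw [hq]; ring)
      · rw [hmemB]; intro i
        have h1 := hpb i; rw [abs_le] at h1
        have h2 := hqb i; rw [hq] at h2
        simp only [Pi.sub_apply] at h2
        rw [abs_le] at h2
        omega
    · rintro ⟨p, ⟨hpk, hp0, hpB⟩, heq⟩
      injection heq with h1 h2
      subst h1; subst h2
      rw [hmemB] at hpB
      refine ⟨⟨hp0, ?_⟩, ⟨?_, ?_⟩, by ring⟩
      · intro i; have := hpB i; rw [abs_le]; omega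
      · intro h
        exact hpk (sub_eq_zero.mp h).symm
      · intro i; have := hpB i
        simp only [Pi.sub_apply]
        rw [abs_le]; omega
  have hfacN : ∀ i, ((Finset.Icc (max (-(N:ℤ)) (k i - N)) (min (N:ℤ) (k i + N))).card : ℤ)
      = 2*(N:ℤ)+1 - |k i| := by
    intro i
    rw [Int.card_Icc]
    have hb := hkb i
    rcases abs_cases (k i) with ⟨h1, h2⟩ | ⟨h1, h2⟩ <;>
      rw [h1] <;> rw [Int.toNat_of_nonneg (by omega)] <;> omega
  have hcardB : (B.card : ℤ) = ∏ i, (2*(N:ℤ)+1 - |k i|) := by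
    rw [hB, Fintype.card_piFinset]
    push_cast
    exact Finset.prod_congr rfl fun i _ => hfacN i
  have hge : 2 ≤ B.card := by
    have h2 : (2 : ℤ) ≤ (B.card : ℤ) := by
      rw [hcardB, Fin.prod_univ_three]
      have f : ∀ i, (2:ℤ) ≤ 2*(N:ℤ)+1 - |k i| := by
        intro i; have := hkb i; have := abs_nonneg (k i); omega
      have h12 : (2:ℤ)*2 ≤ (2*(N:ℤ)+1 - |k 1|) * (2*(N:ℤ)+1 - |k 2|) :=
        mul_le_mul (f 1) (f 2) (by norm_num) (by linarith [f 1])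
      nlinarith [f 0, h12]
    exact_mod_cast h2
  have hcount : triadCount N k = B.card - 1 - 1 := by
    rw [triadCount, hset, Set.ncard_image_of_injective _ hinj, Set.ncard_coe_finset]
    rw [Finset.card_erase_of_mem hkB', Finset.card_erase_of_mem h0B]
  rw [hcount]
  have hcast : ((B.card - 1 - 1 : ℕ) : ℤ) = (B.card : ℤ) - 2 := by omega
  rw [hcast, hcardB]

lemma mul3_le {x y z X Y Z : ℤ} (hx : x ≤ X) (hy : y ≤ Y) (hz : z ≤ Z)
    (hy0 : 0 ≤ y) (hz0 : 0 ≤ z) (hX : 0 ≤ X) (hXY : 0 ≤ X * Y) :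
    x * y * z ≤ X * Y * Z :=
  mul_le_mul (mul_le_mul hx hy hy0 hX) hz hz0 hXY

lemma prod_key (N : ℕ) (hN : 1 ≤ N) (k : Fin 3 → ℤ) (hk : k ∈ Lam N) :
    (∏ i, (2*(N:ℤ)+1 - |k i|)) ≤ 2*(N:ℤ)*(2*(N:ℤ)+1)^2 ∧
    ((∏ i, (2*(N:ℤ)+1 - |k i|)) = 2*(N:ℤ)*(2*(N:ℤ)+1)^2 ↔ IsAxial k) := by
  obtain ⟨hk0, hkb⟩ := hk
  rw [Fin.prod_univ_three]
  have hN' : (1 : ℤ) ≤ (N : ℤ) := by exact_mod_cast hN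
  have a0 := abs_nonneg (k 0); have a1 := abs_nonneg (k 1); have a2 := abs_nonneg (k 2)
  have b0 := hkb 0; have b1 := hkb 1; have b2 := hkb 2
  have hne : 1 ≤ |k 0| + |k 1| + |k 2| := by
    by_contra h
    push_neg at h
    apply hk0
    funext i
    fin_cases i
    · show k 0 = 0; exact abs_eq_zero.mp (by omega)
    · show k 1 = 0; exact abs_eq_zero.mp (by omega)
    · show k 2 = 0; exact abs_eq_zero.mp (by omega)
  have hle : (2*(N:ℤ)+1 - |k 0|) * (2*(N:ℤ)+1 - |k 1|) * (2*(N:ℤ)+1 - |k 2|)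
      ≤ 2*(N:ℤ)*(2*(N:ℤ)+1)^2 := by
    rcases (by omega : 1 ≤ |k 0| ∨ 1 ≤ |k 1| ∨ 1 ≤ |k 2|) with h | h | h
    · calc (2*(N:ℤ)+1 - |k 0|) * (2*(N:ℤ)+1 - |k 1|) * (2*(N:ℤ)+1 - |k 2|)
          ≤ (2*(N:ℤ)) * (2*(N:ℤ)+1) * (2*(N:ℤ)+1) :=
            mul3_le (by omega) (by omega) (by omega) (by omega) (by omega) (by omega)
              (by nlinarith)
        _ = 2*(N:ℤ)*(2*(N:ℤ)+1)^2 := by ring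
    · calc (2*(N:ℤ)+1 - |k 0|) * (2*(N:ℤ)+1 - |k 1|) * (2*(N:ℤ)+1 - |k 2|)
          ≤ (2*(N:ℤ)+1) * (2*(N:ℤ)) * (2*(N:ℤ)+1) :=
            mul3_le (by omega) (by omega) (by omega) (by omega) (by omega) (by omega)
              (by nlinarith)
        _ = 2*(N:ℤ)*(2*(N:ℤ)+1)^2 := by ring
    · calc (2*(N:ℤ)+1 - |k 0|) * (2*(N:ℤ)+1 - |k 1|) * (2*(N:ℤ)+1 - |k 2|)
          ≤ (2*(N:ℤ)+1) * (2*(N:ℤ)+1) * (2*(N:ℤ)) :=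
            mul3_le (by omega) (by omega) (by omega) (by omega) (by omega) (by omega)
              (by nlinarith)
        _ = 2*(N:ℤ)*(2*(N:ℤ)+1)^2 := by ring
  refine ⟨hle, ?_, ?_⟩
  · intro heq
    have h0le : |k 0| ≤ 1 := by
      by_contra h
      push_neg at h
      have hb : (2*(N:ℤ)+1 - |k 0|) * (2*(N:ℤ)+1 - |k 1|) * (2*(N:ℤ)+1 - |k 2|)
          ≤ (2*(N:ℤ)-1) * (2*(N:ℤ)+1) * (2*(N:ℤ)+1) :=
        mul3_le (by omega) (by omega) (by omega) (by omega) (by omega) (by omega)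
          (by nlinarith)
      nlinarith
    have h1le : |k 1| ≤ 1 := by
      by_contra h
      push_neg at h
      have hb : (2*(N:ℤ)+1 - |k 0|) * (2*(N:ℤ)+1 - |k 1|) * (2*(N:ℤ)+1 - |k 2|)
          ≤ (2*(N:ℤ)+1) * (2*(N:ℤ)-1) * (2*(N:ℤ)+1) :=
        mul3_le (by omega) (by omega) (by omega) (by omega) (by omega) (by omega)
          (by nlinarith)
      nlinarith
    have h2le : |k 2| ≤ 1 := by
      by_contra h
      push_neg at h
      have hb : (2*(N:ℤ)+1 - |k 0|) * (2*(N:ℤ)+1 - |k 1|) * (2*(N:ℤ)+1 - |k 2|)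
          ≤ (2*(N:ℤ)+1) * (2*(N:ℤ)+1) * (2*(N:ℤ)-1) :=
        mul3_le (by omega) (by omega) (by omega) (by omega) (by omega) (by omega)
          (by nlinarith)
      nlinarith
    have c0 : |k 0| = 0 ∨ |k 0| = 1 := by omega
    have c1 : |k 1| = 0 ∨ |k 1| = 1 := by omega
    have c2 : |k 2| = 0 ∨ |k 2| = 1 := by omega
    rcases c0 with h0 | h0 <;> rcases c1 with h1 | h1 <;> rcases c2 with h2 | h2 <;>
      rw [h0, h1, h2] at heq
    · omega
    · exact ⟨2, h2, by
        intro j hj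
        fin_cases j
        · exact abs_eq_zero.mp h0
        · exact abs_eq_zero.mp h1
        · exact absurd rfl hj⟩
    · exact ⟨1, h1, by
        intro j hj
        fin_cases j
        · exact abs_eq_zero.mp h0
        · exact absurd rfl hj
        · exact abs_eq_zero.mp h2⟩
    · exact absurd heq (by nlinarith)
    · exact ⟨0, h0, by
        intro j hj
        fin_cases j
        · exact absurd rfl hj
        · exact abs_eq_zero.mp h1
        · exact abs_eq_zero.mp h2⟩
    · exact absurd heq (by nlinarith)
    · exact absurd heq (by nlinarith)
    · exact absurd heq (by nlinarith)
  · rintro ⟨i, hi, hz⟩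
    fin_cases i
    · rw [show k 1 = 0 from hz 1 (by decide), show k 2 = 0 from hz 2 (by decide)]
      rw [show |k 0| = 1 from hi, abs_zero]
      ring
    · rw [show k 0 = 0 from hz 0 (by decide), show k 2 = 0 from hz 2 (by decide)]
      rw [show |k 1| = 1 from hi, abs_zero]
      ring
    · rw [show k 0 = 0 from hz 0 (by decide), show k 1 = 0 from hz 1 (by decide)]
      rw [show |k 2| = 1 from hi, abs_zero]
      ring

/-- The maximum of `T(k,N)` over `Λ_N` is `2N(2N+1)² - 2`, attained exactly
at the six axial vectors. -/
theorem max_triad_count (N : ℕ) (hN : 1 ≤ N) :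
    (∀ k ∈ Lam N, (triadCount N k : ℤ) ≤ 2 * N * (2 * N + 1) ^ 2 - 2) ∧
    (∀ k ∈ Lam N,
      ((triadCount N k : ℤ) = 2 * N * (2 * N + 1) ^ 2 - 2 ↔ IsAxial k)) := by
  constructor
  · intro k hk
    rw [triad_formula N hN k hk]
    have := (prod_key N hN k hk).1
    linarith
  · intro k hk
    rw [triad_formula N hN k hk, sub_left_inj]
    exact (prod_key N hN k hk).2
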